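/- arXiv:1905.12379 — 4 statements merged into one kernel-verified Lean document; each statement's English description precedes it below -/
import Mathlib

section
/- There exists an optimal solution to the K-facility reallocation problem on the real line in which, at every stage t and for every facility k, the facility's position belongs to the finite set consisting of all agent positions over all stages together with the initial facility positions. -/
/-- Total cost of a solution `x` to the K-facility reallocation problem on the line:
moving cost plus connection cost over stages 1..T. -/
noncomputable def reallocCost (K T n : ℕ) (hK : 0 < K) (α : ℕ → Fin n → ℝ)
    (x : ℕ → Fin K → ℝ) : ℝ :=
  ∑ t ∈ Finset.Icc 1 T,
    (∑ k, |x t k - x (t - 1) k| +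
      ∑ i, Finset.univ.inf'
        (Finset.univ_nonempty_iff.mpr (Fin.pos_iff_nonempty.mp hK))
        (fun k : Fin K => |α t i - x t k|))

/-!
Fix, at every stage, a nearest facility for each agent; the cost then becomes a sum of distances
`|a - b|`. Round every point of the line to one of its two neighbours in `P = Pos` (after clamping
to `[min P, max P]`), taking the upper one iff a uniform threshold `θ ∈ [0, 1]` lies below the
relative position of the point in its gap. This rounding fixes `P`, is monotone in the point, and
its expectation is the clamp, so `E |r a - r b| ≤ |a - b|`. Hence some `θ` rounds any solution to a
`P`-valued one that is no more expensive, and a cheapest among the finitely many `P`-valued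
solutions is optimal.
-/

open Finset MeasureTheory unitInterval

namespace FacilityRealloc

section Rounding

variable (P : Finset ℝ) (hP : P.Nonempty)

noncomputable def clamp (y : ℝ) : ℝ := max (P.min' hP) (min (P.max' hP) y)

lemma min'_le_clamp (y : ℝ) : P.min' hP ≤ clamp P hP y := le_max_left _ _

lemma clamp_le_max' (y : ℝ) : clamp P hP y ≤ P.max' hP :=
  max_le (P.min'_le _ (P.max'_mem hP)) (min_le_left _ _)

lemma clamp_of_mem {q : ℝ} (hq : q ∈ P) : clamp P hP q = q := by
  rw [clamp, min_eq_right (P.le_max' q hq), max_eq_right (P.min'_le q hq)]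

lemma clamp_mono : Monotone (clamp P hP) :=
  fun _ _ h => max_le_max le_rfl (min_le_min le_rfl h)

lemma abs_clamp_sub_clamp_le (a b : ℝ) : |clamp P hP a - clamp P hP b| ≤ |a - b| := by
  rw [clamp, clamp, max_comm (P.min' hP), max_comm (P.min' hP)]
  refine (abs_max_sub_max_le_abs _ _ _).trans ?_
  simpa using abs_min_sub_min_le_max (P.max' hP) a (P.max' hP) b

noncomputable def lower (y : ℝ) : ℝ :=
  (P.filter (· ≤ clamp P hP y)).max'
    ⟨P.min' hP, mem_filter.2 ⟨P.min'_mem hP, min'_le_clamp P hP y⟩⟩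

noncomputable def upper (y : ℝ) : ℝ :=
  (P.filter (clamp P hP y ≤ ·)).min'
    ⟨P.max' hP, mem_filter.2 ⟨P.max'_mem hP, clamp_le_max' P hP y⟩⟩

lemma lower_mem (y : ℝ) : lower P hP y ∈ P := (mem_filter.1 (max'_mem _ _)).1

lemma upper_mem (y : ℝ) : upper P hP y ∈ P := (mem_filter.1 (min'_mem _ _)).1

lemma lower_le_clamp (y : ℝ) : lower P hP y ≤ clamp P hP y :=
  (mem_filter.1 ((P.filter (· ≤ clamp P hP y)).max'_mem _)).2

lemma clamp_le_upper (y : ℝ) : clamp P hP y ≤ upper P hP y :=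
  (mem_filter.1 ((P.filter (clamp P hP y ≤ ·)).min'_mem _)).2

lemma lower_le_upper (y : ℝ) : lower P hP y ≤ upper P hP y :=
  (lower_le_clamp P hP y).trans (clamp_le_upper P hP y)

lemma le_lower {q y : ℝ} (hq : q ∈ P) (h : q ≤ clamp P hP y) : q ≤ lower P hP y :=
  le_max' _ q (mem_filter.2 ⟨hq, h⟩)

lemma upper_le {q y : ℝ} (hq : q ∈ P) (h : clamp P hP y ≤ q) : upper P hP y ≤ q :=
  min'_le _ q (mem_filter.2 ⟨hq, h⟩)

lemma lower_of_mem {q : ℝ} (hq : q ∈ P) : lower P hP q = q :=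
  le_antisymm ((lower_le_clamp P hP q).trans_eq (clamp_of_mem P hP hq))
    (le_lower P hP hq (clamp_of_mem P hP hq).ge)

lemma upper_of_mem {q : ℝ} (hq : q ∈ P) : upper P hP q = q :=
  le_antisymm (upper_le P hP hq (clamp_of_mem P hP hq).le)
    ((clamp_of_mem P hP hq).symm.trans_le (clamp_le_upper P hP q))

lemma lower_eq_and_upper_eq {a b : ℝ} (hab : a ≤ b) (h : lower P hP b < upper P hP a) :
    lower P hP a = lower P hP b ∧ upper P hP a = upper P hP b := by
  have hclamp := clamp_mono P hP hab
  have hb : clamp P hP b ≤ upper P hP a :=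
    le_of_not_gt fun hlt => h.not_ge (le_lower P hP (upper_mem P hP a) hlt.le)
  have ha : lower P hP b ≤ clamp P hP a :=
    le_of_not_gt fun hlt => h.not_ge (upper_le P hP (lower_mem P hP b) hlt.le)
  exact ⟨le_antisymm (le_lower P hP (lower_mem P hP a) ((lower_le_clamp P hP a).trans hclamp))
      (le_lower P hP (lower_mem P hP b) ha),
    le_antisymm (upper_le P hP (upper_mem P hP b) (hclamp.trans (clamp_le_upper P hP b)))
      (upper_le P hP (upper_mem P hP a) hb)⟩

noncomputable def round (θ : I) (y : ℝ) : ℝ :=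
  if (θ : ℝ) * (upper P hP y - lower P hP y) ≤ clamp P hP y - lower P hP y then upper P hP y
  else lower P hP y

lemma round_mem (θ : I) (y : ℝ) : round P hP θ y ∈ P := by
  unfold round; split
  · exact upper_mem P hP y
  · exact lower_mem P hP y

lemma round_of_mem (θ : I) {q : ℝ} (hq : q ∈ P) : round P hP θ q = q := by
  unfold round; split
  · exact upper_of_mem P hP hq
  · exact lower_of_mem P hP hq

lemma lower_le_round (θ : I) (y : ℝ) : lower P hP y ≤ round P hP θ y := by
  unfold round; split
  · exact lower_le_upper P hP y
  · exact le_rfl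

lemma round_le_upper (θ : I) (y : ℝ) : round P hP θ y ≤ upper P hP y := by
  unfold round; split
  · exact le_rfl
  · exact lower_le_upper P hP y

lemma round_mono (θ : I) : Monotone (round P hP θ) := by
  intro a b hab
  by_cases hgap : upper P hP a ≤ lower P hP b
  · exact (round_le_upper P hP θ a).trans (hgap.trans (lower_le_round P hP θ b))
  obtain ⟨hlower, hupper⟩ := lower_eq_and_upper_eq P hP hab (not_le.1 hgap)
  have hclamp := clamp_mono P hP hab
  unfold round
  rw [hlower, hupper]
  split_ifs with ha hb
  · exact le_rfl
  · exact absurd (ha.trans (by linarith)) hb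
  · exact lower_le_upper P hP b
  · exact le_rfl

lemma round_eq_add_indicator (y : ℝ) :
    (fun θ => round P hP θ y) = fun θ => lower P hP y +
      {θ : I | (θ : ℝ) * (upper P hP y - lower P hP y) ≤ clamp P hP y - lower P hP y}.indicator
        (fun _ => upper P hP y - lower P hP y) θ := by
  ext θ
  by_cases h : (θ : ℝ) * (upper P hP y - lower P hP y) ≤ clamp P hP y - lower P hP y <;>
    simp [round, h]

lemma integrable_round (y : ℝ) : Integrable (fun θ => round P hP θ y) := by
  rw [round_eq_add_indicator]
  exact (integrable_const _).add
    ((integrable_const _).indicator (measurableSet_le (by fun_prop) (by fun_prop)))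

lemma integral_round (y : ℝ) : ∫ θ, round P hP θ y = clamp P hP y := by
  have hS : MeasurableSet {θ : I | (θ : ℝ) * (upper P hP y - lower P hP y) ≤
      clamp P hP y - lower P hP y} := measurableSet_le (by fun_prop) (by fun_prop)
  rw [round_eq_add_indicator, integral_add (integrable_const _) ((integrable_const _).indicator hS),
    integral_indicator_const _ hS, integral_const, probReal_univ, one_smul, smul_eq_mul]
  set L := lower P hP y
  set U := upper P hP y
  set c := clamp P hP y
  suffices volume.real {θ : I | (θ : ℝ) * (U - L) ≤ c - L} * (U - L) = c - L by linarith
  have hLc : L ≤ c := lower_le_clamp P hP y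
  have hcU : c ≤ U := clamp_le_upper P hP y
  rcases hLc.trans hcU |>.eq_or_lt with hLU | hLU
  · have hc : c = L := le_antisymm (hcU.trans_eq hLU.symm) hLc
    simp [hLU, hc]
  · have hτ0 : 0 ≤ (c - L) / (U - L) := div_nonneg (by linarith) (by linarith)
    have hτ1 : (c - L) / (U - L) ≤ 1 := (div_le_one (by linarith)).2 (by linarith)
    have hset : {θ : I | (θ : ℝ) * (U - L) ≤ c - L} = Set.Iic ⟨(c - L) / (U - L), hτ0, hτ1⟩ := by
      ext θ
      simp [← Subtype.coe_le_coe, le_div_iff₀ (sub_pos.2 hLU)]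
    rw [hset, measureReal_def, volume_Iic, ENNReal.toReal_ofReal hτ0]
    field_simp

lemma integrable_abs_round_sub_round (a b : ℝ) :
    Integrable (fun θ => |round P hP θ a - round P hP θ b|) :=
  ((integrable_round P hP a).sub (integrable_round P hP b)).abs

lemma integral_abs_round_sub_round_le (a b : ℝ) :
    ∫ θ, |round P hP θ a - round P hP θ b| ≤ |a - b| := by
  wlog hba : b ≤ a generalizing a b
  · simpa only [abs_sub_comm] using this b a (le_of_not_ge hba)
  calc ∫ θ, |round P hP θ a - round P hP θ b|
      = ∫ θ, (round P hP θ a - round P hP θ b) := by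
        congr with θ
        exact abs_of_nonneg (sub_nonneg.2 (round_mono P hP θ hba))
    _ = clamp P hP a - clamp P hP b := by
        rw [integral_sub (integrable_round P hP a) (integrable_round P hP b), integral_round,
          integral_round]
    _ ≤ |a - b| := (le_abs_self _).trans (abs_clamp_sub_clamp_le P hP a b)

end Rounding

section Cost

variable {K n : ℕ}

/-- The cost when agent `i` is served at stage `t` by facility `κ t i`. -/
def assignedCost (T : ℕ) (κ : ℕ → Fin n → Fin K) (α : ℕ → Fin n → ℝ) (x : ℕ → Fin K → ℝ) :
    ℝ :=
  ∑ t ∈ Icc 1 T, (∑ k, |x t k - x (t - 1) k| + ∑ i, |α t i - x t (κ t i)|)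

variable {T : ℕ}

lemma reallocCost_le_assignedCost (hK : 0 < K) (κ : ℕ → Fin n → Fin K) (α : ℕ → Fin n → ℝ)
    (x : ℕ → Fin K → ℝ) : reallocCost K T n hK α x ≤ assignedCost T κ α x :=
  sum_le_sum fun _ _ => add_le_add le_rfl (sum_le_sum fun _ _ => inf'_le _ (mem_univ _))

lemma exists_assignedCost_eq (hK : 0 < K) (α : ℕ → Fin n → ℝ) (x : ℕ → Fin K → ℝ) :
    ∃ κ, assignedCost T κ α x = reallocCost K T n hK α x := by
  choose κ _ hκ using fun t i => exists_mem_eq_inf'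
    (univ_nonempty_iff.mpr (Fin.pos_iff_nonempty.mp hK)) fun k : Fin K => |α t i - x t k|
  exact ⟨κ, sum_congr rfl fun t _ => by simp only [hκ]⟩

lemma reallocCost_congr (hK : 0 < K) (α : ℕ → Fin n → ℝ) {x x' : ℕ → Fin K → ℝ}
    (h : ∀ t ≤ T, x t = x' t) : reallocCost K T n hK α x = reallocCost K T n hK α x' :=
  sum_congr rfl fun t ht => by
    rw [h t (mem_Icc.1 ht).2, h (t - 1) (by have := (mem_Icc.1 ht).2; omega)]

lemma exists_assignedCost_comp_le {Θ : Type*} [MeasurableSpace Θ] (μ : Measure Θ)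
    [IsProbabilityMeasure μ] (r : Θ → ℝ → ℝ)
    (hr_int : ∀ a b, Integrable (fun θ => |r θ a - r θ b|) μ)
    (hr : ∀ a b, ∫ θ, |r θ a - r θ b| ∂μ ≤ |a - b|)
    (κ : ℕ → Fin n → Fin K) (α : ℕ → Fin n → ℝ) (x : ℕ → Fin K → ℝ) :
    ∃ θ, assignedCost T κ (fun t i => r θ (α t i)) (fun t k => r θ (x t k)) ≤
      assignedCost T κ α x := by
  have hmove : ∀ t, Integrable (fun θ => ∑ k, |r θ (x t k) - r θ (x (t - 1) k)|) μ :=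
    fun t => integrable_finsetSum _ fun k _ => hr_int _ _
  have hserve : ∀ t, Integrable (fun θ => ∑ i, |r θ (α t i) - r θ (x t (κ t i))|) μ :=
    fun t => integrable_finsetSum _ fun i _ => hr_int _ _
  have hstage : ∀ t, Integrable (fun θ => ∑ k, |r θ (x t k) - r θ (x (t - 1) k)| +
      ∑ i, |r θ (α t i) - r θ (x t (κ t i))|) μ := fun t => (hmove t).add (hserve t)
  obtain ⟨θ, hθ⟩ := exists_le_integral (f := fun θ =>
    assignedCost T κ (fun t i => r θ (α t i)) (fun t k => r θ (x t k)))
    (integrable_finsetSum _ fun t _ => hstage t)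
  refine ⟨θ, hθ.trans ?_⟩
  simp only [assignedCost]
  rw [integral_finsetSum _ fun t _ => hstage t]
  refine sum_le_sum fun t _ => ?_
  rw [integral_add (hmove t) (hserve t), integral_finsetSum _ fun k _ => hr_int _ _,
    integral_finsetSum _ fun i _ => hr_int _ _]
  exact add_le_add (sum_le_sum fun k _ => hr _ _) (sum_le_sum fun i _ => hr _ _)

lemma exists_mem_reallocCost_le (P : Finset ℝ) (hK : 0 < K) (α : ℕ → Fin n → ℝ)
    (hα : ∀ t ∈ Icc 1 T, ∀ i, α t i ∈ P) (y : ℕ → Fin K → ℝ) (hy : ∀ k, y 0 k ∈ P) :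
    ∃ z : ℕ → Fin K → ℝ, z 0 = y 0 ∧ (∀ t k, z t k ∈ P) ∧
      reallocCost K T n hK α z ≤ reallocCost K T n hK α y := by
  have hP : P.Nonempty := ⟨_, hy ⟨0, hK⟩⟩
  obtain ⟨κ, hκ⟩ := exists_assignedCost_eq (T := T) hK α y
  obtain ⟨θ, hθ⟩ := exists_assignedCost_comp_le volume (round P hP)
    (integrable_abs_round_sub_round P hP) (integral_abs_round_sub_round_le P hP) κ α y
  set z : ℕ → Fin K → ℝ := fun t k => round P hP θ (y t k)
  have hαz : assignedCost T κ (fun t i => round P hP θ (α t i)) z = assignedCost T κ α z :=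
    sum_congr rfl fun t ht => by simp only [round_of_mem P hP θ (hα t ht _)]
  refine ⟨z, funext fun k => round_of_mem P hP θ (hy k), fun t k => round_mem P hP θ _, ?_⟩
  calc reallocCost K T n hK α z ≤ assignedCost T κ α z := reallocCost_le_assignedCost hK κ α z
    _ = assignedCost T κ (fun t i => round P hP θ (α t i)) z := hαz.symm
    _ ≤ assignedCost T κ α y := hθ
    _ = reallocCost K T n hK α y := hκ

noncomputable def extendStages (T : ℕ) {P : Finset ℝ} (x0 : Fin K → ℝ)
    (g : Icc 1 T → Fin K → P) (t : ℕ) (k : Fin K) : ℝ :=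
  if ht : t ∈ Icc 1 T then g ⟨t, ht⟩ k else x0 k

lemma extendStages_zero {P : Finset ℝ} (x0 : Fin K → ℝ) (g : Icc 1 T → Fin K → P) :
    extendStages T x0 g 0 = x0 :=
  funext fun _ => dif_neg (by simp)

lemma extendStages_of_mem {P : Finset ℝ} (x0 : Fin K → ℝ) (g : Icc 1 T → Fin K → P) {t : ℕ}
    (ht : t ∈ Icc 1 T) (k : Fin K) : extendStages T x0 g t k = g ⟨t, ht⟩ k :=
  dif_pos ht

lemma exists_reallocCost_min_of_mem (P : Finset ℝ) (hK : 0 < K) (α : ℕ → Fin n → ℝ)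
    (x0 : Fin K → ℝ) (hx0 : ∀ k, x0 k ∈ P) :
    ∃ x : ℕ → Fin K → ℝ, x 0 = x0 ∧ (∀ t ∈ Icc 1 T, ∀ k, x t k ∈ P) ∧
      ∀ z : ℕ → Fin K → ℝ, z 0 = x0 → (∀ t ∈ Icc 1 T, ∀ k, z t k ∈ P) →
        reallocCost K T n hK α x ≤ reallocCost K T n hK α z := by
  classical
  have : Nonempty (Icc 1 T → Fin K → P) := ⟨fun _ _ => ⟨x0 ⟨0, hK⟩, hx0 _⟩⟩
  obtain ⟨g, -, hg⟩ := exists_min_image univ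
    (fun g : Icc 1 T → Fin K → P => reallocCost K T n hK α (extendStages T x0 g)) univ_nonempty
  refine ⟨extendStages T x0 g, extendStages_zero x0 g,
    fun t ht k => extendStages_of_mem x0 g ht k ▸ (g ⟨t, ht⟩ k).2, fun z hz0 hzP => ?_⟩
  refine (hg (fun t k => ⟨z t k, hzP t t.2 k⟩) (mem_univ _)).trans_eq
    (reallocCost_congr hK α fun t ht => funext fun k => ?_)
  rcases Nat.eq_zero_or_pos t with rfl | ht0
  · rw [extendStages_zero, hz0]
  · exact extendStages_of_mem x0 _ (mem_Icc.2 ⟨ht0, ht⟩) k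

end Cost

end FacilityRealloc

open FacilityRealloc in
/-- There exists an optimal solution whose facility positions at every stage
belong to the set of all agent positions (over all stages) together with the
initial facility positions. -/
theorem stmt0 (K T n : ℕ) (hK : 0 < K) (x0 : Fin K → ℝ) (α : ℕ → Fin n → ℝ) :
    ∃ x : ℕ → Fin K → ℝ, x 0 = x0 ∧
      (∀ y : ℕ → Fin K → ℝ, y 0 = x0 →
        reallocCost K T n hK α x ≤ reallocCost K T n hK α y) ∧
      (∀ t ∈ Finset.Icc 1 T, ∀ k : Fin K,
        (∃ s ∈ Finset.Icc 1 T, ∃ i : Fin n, x t k = α s i) ∨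
        (∃ k' : Fin K, x t k = x0 k')) := by
  classical
  set P : Finset ℝ := (Icc 1 T ×ˢ univ).image (fun p : ℕ × Fin n => α p.1 p.2) ∪ univ.image x0
  have hαP : ∀ t ∈ Icc 1 T, ∀ i, α t i ∈ P := fun t ht i =>
    mem_union_left _ (mem_image.2 ⟨(t, i), mem_product.2 ⟨ht, mem_univ i⟩, rfl⟩)
  have hx0P : ∀ k, x0 k ∈ P := fun k => mem_union_right _ (mem_image_of_mem x0 (mem_univ k))
  obtain ⟨x, hx0, hxP, hxmin⟩ := exists_reallocCost_min_of_mem P hK α x0 hx0P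
  refine ⟨x, hx0, fun y hy => ?_, fun t ht k => ?_⟩
  · obtain ⟨z, hz0, hzP, hzy⟩ := exists_mem_reallocCost_le P hK α hαP y (hy ▸ hx0P)
    exact (hxmin z (hz0.trans hy) fun t _ k => hzP t k).trans hzy
  · rcases mem_union.1 (hxP t ht k) with h | h
    · obtain ⟨⟨s, i⟩, hs, hsi⟩ := mem_image.1 h
      exact Or.inl ⟨s, (mem_product.1 hs).1, i, hsi.symm⟩
    · obtain ⟨k', -, hk'⟩ := mem_image.1 h
      exact Or.inr ⟨k', hk'.symm⟩
end

section
/- For a single agent at a fixed stage in an optimal fractional LP solution, the set of nodes the agent fractionally connects to (with assignment values in {0, 1/N}) forms a consecutive block of N nodes among the nodes carrying positive facility mass, ordered left to right on the line; consequently the agent's fractional connection cost equals (1/N) times the sum of distances to these N consecutive nodes. -/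
/-!
An optimal assignment can never prefer a node `j` it does not use to a node `k` it does use:
moving the mass `1/N` from `k` to `j` is again feasible, so `|a - Y k| ≤ |a - Y j|`.
On a line, a node strictly between two used nodes is strictly closer to `a` than one of them,
so it is used as well. Hence the support is a block of consecutive indices, and since every used
node carries mass `1/N` and the masses sum to `1`, the block has exactly `N` nodes.
-/

open Finset

theorem Finset.eq_Icc_min'_max'_of_ordConnected {α : Type*} [LinearOrder α] [LocallyFiniteOrder α]
    {s : Finset α} (hs : (s : Set α).OrdConnected) (hne : s.Nonempty) :
    s = Icc (s.min' hne) (s.max' hne) := by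
  ext x
  refine ⟨fun hx ↦ mem_Icc.2 ⟨s.min'_le x hx, s.le_max' x hx⟩, fun hx ↦ ?_⟩
  exact hs.out (s.min'_mem hne) (s.max'_mem hne) (by simpa using hx)

theorem Finset.eq_Ico_min'_of_ordConnected {s : Finset ℕ} (hs : (s : Set ℕ).OrdConnected)
    (hne : s.Nonempty) : s = Ico (s.min' hne) (s.min' hne + #s) := by
  have hIcc := eq_Icc_min'_max'_of_ordConnected hs hne
  have hcard : #s = s.max' hne + 1 - s.min' hne := by
    conv_lhs => rw [hIcc]
    exact Nat.card_Icc _ _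
  have hle := s.min'_le _ (s.max'_mem hne)
  rwa [hcard, show s.min' hne + (s.max' hne + 1 - s.min' hne) = s.max' hne + 1 by omega,
    Ico_add_one_right_eq_Icc]

theorem abs_sub_lt_max_of_lt_of_lt {p q r : ℝ} (hpq : p < q) (hqr : q < r) (a : ℝ) :
    |a - q| < max |a - p| |a - r| := by
  rcases le_total a q with h | h
  · refine lt_max_of_lt_right ?_
    rw [abs_of_nonpos (by linarith), abs_of_neg (by linarith)]
    linarith
  · refine lt_max_of_lt_left ?_
    rw [abs_of_nonneg (by linarith), abs_of_pos (by linarith)]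
    linarith

section Assignment

variable {n : ℕ} {c : ℝ} {w : ℕ → ℝ}

theorem sum_mul_eq_mul_sum_filter (hw : ∀ j < n, w j = 0 ∨ w j = c) (f : ℕ → ℝ) :
    ∑ j ∈ range n, f j * w j = c * ∑ j ∈ range n with w j = c, f j := by
  rw [sum_filter, mul_sum]
  refine sum_congr rfl fun j hj ↦ ?_
  rcases hw j (mem_range.1 hj) with h | h
  · by_cases hc : c = 0 <;> simp [h, hc, eq_comm]
  · simp [h, mul_comm]

theorem sum_mul_swap {j k : ℕ} (hj : j < n) (hk : k < n) (g : ℕ → ℝ) :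
    ∑ i ∈ range n, g i * (w i + (if i = j then c else 0) - (if i = k then c else 0))
      = ∑ i ∈ range n, g i * w i + g j * c - g k * c := by
  simp only [mul_sub, mul_add, sum_add_distrib, sum_sub_distrib, mul_ite, mul_zero,
    sum_ite_eq', mem_range, hj, hk, if_true]

theorem cost_le_of_optimal (hc : 0 < c) (hw : ∀ j < n, w j = 0 ∨ w j = c)
    (hsum : ∑ j ∈ range n, w j = 1) {f : ℕ → ℝ}
    (hopt : ∀ w' : ℕ → ℝ, (∀ j < n, w' j = 0 ∨ w' j = c) → ∑ j ∈ range n, w' j = 1 →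
      ∑ j ∈ range n, f j * w j ≤ ∑ j ∈ range n, f j * w' j)
    {j k : ℕ} (hj : j < n) (hk : k < n) (hwj : w j = 0) (hwk : w k = c) : f k ≤ f j := by
  have hjk : j ≠ k := by rintro rfl; linarith
  set w' : ℕ → ℝ := fun i ↦ w i + (if i = j then c else 0) - (if i = k then c else 0)
  have hw' : ∀ i < n, w' i = 0 ∨ w' i = c := by
    intro i hi
    by_cases hij : i = j
    · subst hij; simp [w', hwj, hjk]
    by_cases hik : i = k
    · subst hik; simp [w', hwk, hij]
    · simpa [w', hij, hik] using hw i hi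
  have hsum' : ∑ i ∈ range n, w' i = 1 := by
    have := sum_mul_swap (w := w) (c := c) hj hk (fun _ ↦ 1)
    simp only [one_mul] at this
    rw [this, hsum]
    ring
  have := hopt w' hw' hsum'
  rw [sum_mul_swap hj hk] at this
  exact le_of_mul_le_mul_right (by linarith) hc

theorem ordConnected_support_of_optimal (hc : 0 < c) (hw : ∀ j < n, w j = 0 ∨ w j = c)
    (hsum : ∑ j ∈ range n, w j = 1) {a : ℝ} {Y : ℕ → ℝ}
    (hY : ∀ i j : ℕ, i < j → j < n → Y i < Y j)
    (hopt : ∀ w' : ℕ → ℝ, (∀ j < n, w' j = 0 ∨ w' j = c) → ∑ j ∈ range n, w' j = 1 →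
      ∑ j ∈ range n, |a - Y j| * w j ≤ ∑ j ∈ range n, |a - Y j| * w' j) :
    ((range n).filter (w · = c) : Set ℕ).OrdConnected := by
  refine Set.ordConnected_of_Ioo fun i hi k hk _ x ⟨hix, hxk⟩ ↦ ?_
  simp only [coe_filter, mem_range] at hi hk ⊢
  have hx : x < n := hxk.trans hk.1
  refine ⟨hx, (hw x hx).resolve_left fun hwx ↦ ?_⟩
  have hi_le := cost_le_of_optimal hc hw hsum hopt hx hi.1 hwx hi.2
  have hk_le := cost_le_of_optimal hc hw hsum hopt hx hk.1 hwx hk.2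
  have := abs_sub_lt_max_of_lt_of_lt (hY i x hix hx) (hY x k hxk hk.1) a
  exact (max_le hi_le hk_le).not_gt this

end Assignment

theorem stmt1_general (K N : ℕ) (a : ℝ) (Y : ℕ → ℝ)
    (hY : ∀ i j : ℕ, i < j → j < K * N → Y i < Y j)
    (w : ℕ → ℝ)
    (hw01 : ∀ j < K * N, w j = 0 ∨ w j = 1 / N)
    (hwsum : ∑ j ∈ Finset.range (K * N), w j = 1)
    (hopt : ∀ w' : ℕ → ℝ, (∀ j < K * N, w' j = 0 ∨ w' j = 1 / N) →
      (∑ j ∈ Finset.range (K * N), w' j = 1) →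
      ∑ j ∈ Finset.range (K * N), |a - Y j| * w j ≤
        ∑ j ∈ Finset.range (K * N), |a - Y j| * w' j) :
    ∃ ℓ : ℕ, ℓ + N ≤ K * N ∧
      (∀ j < K * N, (w j = 1 / N ↔ ℓ ≤ j ∧ j < ℓ + N)) ∧
      ∑ j ∈ Finset.range (K * N), |a - Y j| * w j
        = (1 / N) * ∑ h ∈ Finset.Ico ℓ (ℓ + N), |a - Y h| := by
  have hcost := sum_mul_eq_mul_sum_filter hw01
  have hmass : 1 / (N : ℝ) * #((range (K * N)).filter (w · = 1 / N)) = 1 := by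
    simpa [hwsum] using (hcost fun _ ↦ 1).symm
  -- `1 / 0 = 0` in `ℝ`, so for `N = 0` the total mass would be `0`.
  have hN : N ≠ 0 := by rintro rfl; simp at hmass
  have hconn := ordConnected_support_of_optimal (by positivity) hw01 hwsum hY hopt
  set S := (range (K * N)).filter (w · = 1 / N)
  have hcard : #S = N := by
    field_simp at hmass
    exact_mod_cast hmass
  have hne : S.Nonempty := card_pos.1 (by omega)
  set ℓ := S.min' hne
  have hS : S = Ico ℓ (ℓ + N) := hcard ▸ eq_Ico_min'_of_ordConnected hconn hne
  have hsub : Ico ℓ (ℓ + N) ⊆ Ico 0 (K * N) := by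
    rw [← hS, ← range_eq_Ico]; exact filter_subset _ _
  refine ⟨ℓ, ((Ico_subset_Ico_iff (by omega)).1 hsub).2, fun j hj ↦ ?_, by rw [hcost, hS]⟩
  rw [← mem_Ico, ← hS, mem_filter, mem_range]
  exact (and_iff_right hj).symm

/-- In an optimal fractional solution, a single agent's assignment (with values
in {0, 1/N}) covers a consecutive block of N of the nodes `Y 0 < Y 1 < ... < Y (K*N - 1)`
carrying positive facility mass, and its fractional connection cost equals
(1/N) times the sum of distances to these N consecutive nodes. -/
theorem stmt1 (K N : ℕ) (hK : 0 < K) (hN : 0 < N) (a : ℝ) (Y : ℕ → ℝ)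
    (hY : ∀ i j : ℕ, i < j → j < K * N → Y i < Y j)
    (w : ℕ → ℝ)
    (hw01 : ∀ j < K * N, w j = 0 ∨ w j = 1 / N)
    (hwsum : ∑ j ∈ Finset.range (K * N), w j = 1)
    (hopt : ∀ w' : ℕ → ℝ, (∀ j < K * N, w' j = 0 ∨ w' j = 1 / N) →
      (∑ j ∈ Finset.range (K * N), w' j = 1) →
      ∑ j ∈ Finset.range (K * N), |a - Y j| * w j ≤
        ∑ j ∈ Finset.range (K * N), |a - Y j| * w' j) :
    ∃ ℓ : ℕ, ℓ + N ≤ K * N ∧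
      (∀ j < K * N, (w j = 1 / N ↔ ℓ ≤ j ∧ j < ℓ + N)) ∧
      ∑ j ∈ Finset.range (K * N), |a - Y j| * w j
        = (1 / N) * ∑ h ∈ Finset.Ico ℓ (ℓ + N), |a - Y h| :=
  stmt1_general K N a Y hY w hw01 hwsum hopt
end

section
/- Step-1 potential inequality (case: both facilities left of all agents): suppose x^{t-1}_1 ≤ x^{t-1}_2 ≤ α^t_1 where α^t_1 = min agent position at stage t, and let z_1 = x^{t-1}_1, z_2 = α^t_1. Suppose y^t_1 ≤ y^t_2 and at least one of y^t_1, y^t_2 lies in [α^t_1, α^t_n]. Then, with Φ(u_1,u_2; v_1,v_2) = 2(|u_1 − v_1| + |u_2 − v_2|) + |u_1 − u_2|, the moving cost satisfies |z_2 − x^{t-1}_2| ≤ 2(|y^t_1 − y^{t-1}_1| + |y^t_2 − y^{t-1}_2|) − Φ(z; y^t) + Φ(x^{t-1}; y^{t-1}). -/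
/-!
The potential of facilities `(u₁, u₂)` against references `(v₁, v₂)` is 2-Lipschitz in the
references, which pays for replacing `y^{t-1}` by `y^t`. Against the fixed reference `y^t`, moving
the second facility from `x₂` right to `α₁ ≤ y₂` lowers the potential by exactly the distance
moved: the reference term drops by twice that distance, while the spread `|u₁ - u₂|` grows by it.
-/

/-- `Φ(u₁, u₂; v₁, v₂)`. -/
def potential (u₁ u₂ v₁ v₂ : ℝ) : ℝ :=
  2 * (|u₁ - v₁| + |u₂ - v₂|) + |u₁ - u₂|

theorem potential_le_add_dist_ref (u₁ u₂ v₁ v₂ w₁ w₂ : ℝ) :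
    potential u₁ u₂ v₁ v₂ ≤ potential u₁ u₂ w₁ w₂ + 2 * (|v₁ - w₁| + |v₂ - w₂|) := by
  have h₁ := abs_sub_le u₁ w₁ v₁
  have h₂ := abs_sub_le u₂ w₂ v₂
  rw [abs_sub_comm w₁ v₁] at h₁
  rw [abs_sub_comm w₂ v₂] at h₂
  unfold potential
  linarith

theorem potential_eq_of_move_toward_ref {u₁ u₂ a v₁ v₂ : ℝ}
    (h₁₂ : u₁ ≤ u₂) (h₂a : u₂ ≤ a) (hav : a ≤ v₂) :
    potential u₁ u₂ v₁ v₂ = potential u₁ a v₁ v₂ + (a - u₂) := by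
  unfold potential
  rw [abs_of_nonpos (by linarith : u₂ - v₂ ≤ 0), abs_of_nonpos (by linarith : a - v₂ ≤ 0),
    abs_of_nonpos (by linarith : u₁ - u₂ ≤ 0), abs_of_nonpos (by linarith : u₁ - a ≤ 0)]
  ring

theorem stmt12_general (x1 x2 a1 an y1 y2 y1p y2p z1 z2 : ℝ)
    (h12 : x1 ≤ x2) (h2a : x2 ≤ a1)
    (hz1 : z1 = x1) (hz2 : z2 = a1)
    (hy : y1 ≤ y2)
    (hyin : (a1 ≤ y1 ∧ y1 ≤ an) ∨ (a1 ≤ y2 ∧ y2 ≤ an)) :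
    |z2 - x2| ≤ 2 * (|y1 - y1p| + |y2 - y2p|)
      - (2 * (|z1 - y1| + |z2 - y2|) + |z1 - z2|)
      + (2 * (|x1 - y1p| + |x2 - y2p|) + |x1 - x2|) := by
  subst hz1 hz2
  have hy2 : z2 ≤ y2 := hyin.elim (fun h => h.1.trans hy) (·.1)
  have hmove := potential_eq_of_move_toward_ref (v₁ := y1) h12 h2a hy2
  have href := potential_le_add_dist_ref z1 x2 y1 y2 y1p y2p
  rw [abs_of_nonneg (sub_nonneg.mpr h2a)]
  unfold potential at hmove href
  linarith

/-- Step-1 potential inequality, case where both facilities are left of all agents: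
with z1 = x1, z2 = α1, the moving cost |z2 − x2| is bounded via the potential
Φ(u1,u2;v1,v2) = 2(|u1 − v1| + |u2 − v2|) + |u1 − u2|, evaluated at stage t
(against y) and stage t−1 (against yp). -/
theorem stmt12 (x1 x2 a1 an y1 y2 y1p y2p z1 z2 : ℝ)
    (h12 : x1 ≤ x2) (h2a : x2 ≤ a1) (haa : a1 ≤ an)
    (hz1 : z1 = x1) (hz2 : z2 = a1)
    (hy : y1 ≤ y2)
    (hyin : (a1 ≤ y1 ∧ y1 ≤ an) ∨ (a1 ≤ y2 ∧ y2 ≤ an)) :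
    |z2 - x2| ≤ 2 * (|y1 - y1p| + |y2 - y2p|)
      - (2 * (|z1 - y1| + |z2 - y2|) + |z1 - z2|)
      + (2 * (|x1 - y1p| + |x2 - y2p|) + |x1 - x2|) :=
  stmt12_general x1 x2 a1 an y1 y2 y1p y2p z1 z2 h12 h2a hz1 hz2 hy hyin
end

section
/- Lower bound transfer: any c-competitive online algorithm for the 2-facility reallocation problem on the line yields a c-competitive online algorithm for the 2-server problem on the line; in particular, since the 2-server problem on the line has competitive ratio at least 2, no online algorithm for 2-facility reallocation on the line is c-competitive for c < 2. -/
/-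
Transfer. Put two agents at every request and snap the nearer facility of the online solution onto
the request. The snapped positions form a 2-server schedule, and the triangle inequality bounds its
cost by the facility movement plus twice the snapping distances, which is exactly the connection
cost. Any 2-server schedule has zero connection cost, so the reallocation optimum is at most the
2-server optimum.

Lower bound. The adversary keeps a lazy configuration of two of the grid points {0, 2, 4} and always
requests the third point, moving a server of the lazy configuration there greedily with respect to
the online configuration. The matching distance between the two configurations and a potential on
the lazy one show that the online cost is at least the total request distance minus 2. The two
offline schedules that always cover the current request pay this distance plus 2 together. Each
request distance is at least 2, so the ratio tends to 2.
-/

noncomputable section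

/-- Connection cost of a multiset of agent positions to a pair of facilities. -/
def connCost (Cm : Multiset ℝ) (p : ℝ × ℝ) : ℝ :=
  (Cm.map fun a => min |a - p.1| |a - p.2|).sum

/-- Moving cost between two pairs of facility positions. -/
def moveCost (p q : ℝ × ℝ) : ℝ := |q.1 - p.1| + |q.2 - p.2|

/-- Facility positions realized by an online 2-facility reallocation algorithm
`Alg x0 t σ` (position pair chosen at stage t on request sequence σ, from initial
positions x0). -/
def algPos (Alg : ℝ × ℝ → ℕ → (ℕ → Multiset ℝ) → ℝ × ℝ) (x0 : ℝ × ℝ)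
    (σ : ℕ → Multiset ℝ) : ℕ → ℝ × ℝ
  | 0 => x0
  | t + 1 => Alg x0 (t + 1) σ

/-- Total cost (moving plus connection) of the online algorithm over stages 1..T. -/
def algCost (Alg : ℝ × ℝ → ℕ → (ℕ → Multiset ℝ) → ℝ × ℝ) (x0 : ℝ × ℝ)
    (σ : ℕ → Multiset ℝ) (T : ℕ) : ℝ :=
  ∑ t ∈ Finset.Icc 1 T,
    (moveCost (algPos Alg x0 σ (t - 1)) (algPos Alg x0 σ t) +
      connCost (σ t) (algPos Alg x0 σ t))

/-- Cost of an offline solution `q` (with `q 0 = x0`) over stages 1..T. -/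
def offCost (σ : ℕ → Multiset ℝ) (q : ℕ → ℝ × ℝ) (T : ℕ) : ℝ :=
  ∑ t ∈ Finset.Icc 1 T, (moveCost (q (t - 1)) (q t) + connCost (σ t) (q t))

/-- Optimal offline cost of a 2-facility reallocation instance. -/
def optCost (x0 : ℝ × ℝ) (σ : ℕ → Multiset ℝ) (T : ℕ) : ℝ :=
  sInf {c : ℝ | ∃ q : ℕ → ℝ × ℝ, q 0 = x0 ∧ c = offCost σ q T}

/-- Online property: the decision at stage t depends only on the requests up to stage t. -/
def OnlineRealloc (Alg : ℝ × ℝ → ℕ → (ℕ → Multiset ℝ) → ℝ × ℝ) : Prop :=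
  ∀ x0 t σ σ', (∀ s ≤ t, σ s = σ' s) → Alg x0 t σ = Alg x0 t σ'

/-- c-competitiveness of an online 2-facility reallocation algorithm, with an additive
constant that may depend on the initial facility positions but not on the requests. -/
def ReallocCompetitive (c : ℝ) (Alg : ℝ × ℝ → ℕ → (ℕ → Multiset ℝ) → ℝ × ℝ) : Prop :=
  OnlineRealloc Alg ∧ ∃ A : ℝ × ℝ → ℝ, ∀ x0 σ T,
    algCost Alg x0 σ T ≤ c * optCost x0 σ T + A x0

/-- Server positions realized by an online 2-server algorithm. -/
def srvPos (B : ℝ × ℝ → ℕ → (ℕ → ℝ) → ℝ × ℝ) (x0 : ℝ × ℝ) (r : ℕ → ℝ) : ℕ → ℝ × ℝ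
  | 0 => x0
  | t + 1 => B x0 (t + 1) r

/-- Total moving cost of an online 2-server algorithm over stages 1..T. -/
def srvAlgCost (B : ℝ × ℝ → ℕ → (ℕ → ℝ) → ℝ × ℝ) (x0 : ℝ × ℝ) (r : ℕ → ℝ) (T : ℕ) : ℝ :=
  ∑ t ∈ Finset.Icc 1 T, moveCost (srvPos B x0 r (t - 1)) (srvPos B x0 r t)

/-- Optimal offline 2-server cost: cheapest movement schedule serving every request. -/
def srvOptCost (x0 : ℝ × ℝ) (r : ℕ → ℝ) (T : ℕ) : ℝ :=
  sInf {c : ℝ | ∃ q : ℕ → ℝ × ℝ, q 0 = x0 ∧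
    (∀ t ∈ Finset.Icc 1 T, (q t).1 = r t ∨ (q t).2 = r t) ∧
    c = ∑ t ∈ Finset.Icc 1 T, moveCost (q (t - 1)) (q t)}

/-- c-competitiveness of an online 2-server algorithm on the line. -/
def ServerCompetitive (c : ℝ) (B : ℝ × ℝ → ℕ → (ℕ → ℝ) → ℝ × ℝ) : Prop :=
  (∀ x0 t r r', (∀ s ≤ t, r s = r' s) → B x0 t r = B x0 t r') ∧
  (∀ x0 t r, 1 ≤ t → (B x0 t r).1 = r t ∨ (B x0 t r).2 = r t) ∧
  ∃ A : ℝ × ℝ → ℝ, ∀ x0 r T, srvAlgCost B x0 r T ≤ c * srvOptCost x0 r T + A x0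

open Finset

lemma sum_Icc_one_eq_sum_range (f : ℕ → ℝ) (T : ℕ) :
    ∑ t ∈ Icc 1 T, f t = ∑ t ∈ range T, f (t + 1) := by
  rw [range_eq_Ico, sum_Ico_add' f 0 T 1, zero_add, Ico_add_one_right_eq_Icc]

lemma moveCost_nonneg (p q : ℝ × ℝ) : 0 ≤ moveCost p q := by
  unfold moveCost; positivity

lemma moveCost_comm (p q : ℝ × ℝ) : moveCost p q = moveCost q p := by
  simp only [moveCost, abs_sub_comm]

lemma moveCost_triangle (p q s : ℝ × ℝ) : moveCost p s ≤ moveCost p q + moveCost q s := by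
  have h1 := abs_sub_le s.1 q.1 p.1
  have h2 := abs_sub_le s.2 q.2 p.2
  simp only [moveCost]
  linarith

lemma connCost_nonneg (C : Multiset ℝ) (p : ℝ × ℝ) : 0 ≤ connCost C p :=
  Multiset.sum_nonneg fun _ hx => by
    obtain ⟨a, -, rfl⟩ := Multiset.mem_map.mp hx
    positivity

lemma connCost_pair (u : ℝ) (p : ℝ × ℝ) :
    connCost {u, u} p = 2 * min |u - p.1| |u - p.2| := by
  simp only [connCost, Multiset.insert_eq_cons, Multiset.map_cons, Multiset.map_singleton,
    Multiset.sum_cons, Multiset.sum_singleton]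
  ring

lemma offCost_nonneg (σ : ℕ → Multiset ℝ) (q : ℕ → ℝ × ℝ) (T : ℕ) : 0 ≤ offCost σ q T :=
  sum_nonneg fun _ _ => add_nonneg (moveCost_nonneg _ _) (connCost_nonneg _ _)

lemma optCost_nonneg (x0 : ℝ × ℝ) (σ : ℕ → Multiset ℝ) (T : ℕ) : 0 ≤ optCost x0 σ T :=
  Real.sInf_nonneg fun _ ⟨q, _, hc⟩ => hc ▸ offCost_nonneg σ q T

lemma optCost_le_offCost {x0 : ℝ × ℝ} (σ : ℕ → Multiset ℝ) {q : ℕ → ℝ × ℝ} (hq : q 0 = x0)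
    (T : ℕ) : optCost x0 σ T ≤ offCost σ q T :=
  csInf_le ⟨0, fun _ ⟨q', _, hc⟩ => hc ▸ offCost_nonneg σ q' T⟩ ⟨q, hq, rfl⟩

lemma srvOptCost_nonneg (x0 : ℝ × ℝ) (r : ℕ → ℝ) (T : ℕ) : 0 ≤ srvOptCost x0 r T :=
  Real.sInf_nonneg fun _ ⟨_, _, _, hc⟩ => hc ▸ sum_nonneg fun _ _ => moveCost_nonneg _ _

lemma srvOptCost_le {x0 : ℝ × ℝ} {r : ℕ → ℝ} {q : ℕ → ℝ × ℝ} {T : ℕ} (hq : q 0 = x0)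
    (hserve : ∀ t ∈ Icc 1 T, (q t).1 = r t ∨ (q t).2 = r t) :
    srvOptCost x0 r T ≤ ∑ t ∈ range T, moveCost (q t) (q (t + 1)) := by
  refine csInf_le ⟨0, fun _ ⟨_, _, _, hc⟩ => hc ▸ sum_nonneg fun _ _ => moveCost_nonneg _ _⟩
    ⟨q, hq, hserve, ?_⟩
  simp only [sum_Icc_one_eq_sum_range (fun t => moveCost (q (t - 1)) (q t)), Nat.add_sub_cancel]

lemma ReallocCompetitive.mono {c c' : ℝ} {Alg : ℝ × ℝ → ℕ → (ℕ → Multiset ℝ) → ℝ × ℝ}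
    (h : ReallocCompetitive c Alg) (hcc : c ≤ c') : ReallocCompetitive c' Alg := by
  obtain ⟨hOn, A, hA⟩ := h
  refine ⟨hOn, A, fun x0 σ T => (hA x0 σ T).trans ?_⟩
  gcongr
  exact optCost_nonneg x0 σ T

lemma sum_moveCost_le_of_tracking {a p : ℕ → ℝ × ℝ} (h0 : p 0 = a 0) (T : ℕ) :
    ∑ t ∈ range T, moveCost (p t) (p (t + 1)) ≤
      ∑ t ∈ range T, (moveCost (a t) (a (t + 1)) + 2 * moveCost (a (t + 1)) (p (t + 1))) := by
  suffices ∀ T, ∑ t ∈ range T, moveCost (p t) (p (t + 1)) + moveCost (a T) (p T) ≤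
      ∑ t ∈ range T, (moveCost (a t) (a (t + 1)) + 2 * moveCost (a (t + 1)) (p (t + 1))) from
    (le_add_of_nonneg_right (moveCost_nonneg _ _)).trans (this T)
  intro T
  induction T with
  | zero => simp [h0, moveCost]
  | succ T ih =>
    have h1 := moveCost_triangle (p T) (a T) (p (T + 1))
    have h2 := moveCost_triangle (a T) (a (T + 1)) (p (T + 1))
    rw [moveCost_comm (p T) (a T)] at h1
    rw [sum_range_succ, sum_range_succ]
    linarith

section Transfer

variable (Alg : ℝ × ℝ → ℕ → (ℕ → Multiset ℝ) → ℝ × ℝ)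

def snap (p : ℝ × ℝ) (u : ℝ) : ℝ × ℝ :=
  if |u - p.1| ≤ |u - p.2| then (u, p.2) else (p.1, u)

lemma snap_serves (p : ℝ × ℝ) (u : ℝ) : (snap p u).1 = u ∨ (snap p u).2 = u := by
  unfold snap
  split_ifs
  exacts [Or.inl rfl, Or.inr rfl]

lemma two_mul_moveCost_snap (p : ℝ × ℝ) (u : ℝ) :
    2 * moveCost p (snap p u) = connCost {u, u} p := by
  rw [connCost_pair]
  unfold snap
  split_ifs with h
  · simp [moveCost, min_eq_left h]
  · simp [moveCost, min_eq_right (not_le.mp h).le]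

def serverOfRealloc : ℝ × ℝ → ℕ → (ℕ → ℝ) → ℝ × ℝ :=
  fun x0 t r => snap (Alg x0 t fun s => {r s, r s}) (r t)

lemma srvAlgCost_serverOfRealloc_le (x0 : ℝ × ℝ) (r : ℕ → ℝ) (T : ℕ) :
    srvAlgCost (serverOfRealloc Alg) x0 r T ≤ algCost Alg x0 (fun s => {r s, r s}) T := by
  have key := sum_moveCost_le_of_tracking
    (a := algPos Alg x0 fun s => {r s, r s}) (p := srvPos (serverOfRealloc Alg) x0 r) rfl T
  simp only [srvAlgCost, algCost, sum_Icc_one_eq_sum_range (fun t => moveCost _ _),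
    sum_Icc_one_eq_sum_range (fun t => moveCost _ _ + connCost _ _), Nat.add_sub_cancel]
  refine key.trans_eq (sum_congr rfl fun t _ => ?_)
  rw [← two_mul_moveCost_snap]
  rfl

lemma optCost_le_srvOptCost (x0 : ℝ × ℝ) (r : ℕ → ℝ) (T : ℕ) :
    optCost x0 (fun s => {r s, r s}) T ≤ srvOptCost x0 r T := by
  refine le_csInf ⟨_, Function.update (fun s => (r s, x0.2)) 0 x0, rfl, fun t ht => ?_, rfl⟩ ?_
  · left
    rw [Function.update_of_ne (by grind)]
  · rintro _ ⟨q, hq, hserve, rfl⟩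
    refine (optCost_le_offCost _ hq T).trans_eq (sum_congr rfl fun t ht => ?_)
    rcases hserve t ht with h | h <;> simp [connCost, h]

end Transfer

theorem ReallocCompetitive.serverCompetitive {c : ℝ}
    {Alg : ℝ × ℝ → ℕ → (ℕ → Multiset ℝ) → ℝ × ℝ} (h : ReallocCompetitive c Alg)
    (hc : 0 ≤ c) : ServerCompetitive c (serverOfRealloc Alg) := by
  obtain ⟨hOn, A, hA⟩ := h
  refine ⟨fun x0 t r r' hr => ?_, fun x0 t r _ => snap_serves _ _, A, fun x0 r T => ?_⟩
  · simp only [serverOfRealloc, hr t le_rfl]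
    rw [hOn x0 t _ _ fun s hs => by rw [hr s hs]]
  · calc srvAlgCost (serverOfRealloc Alg) x0 r T
        ≤ algCost Alg x0 (fun s => {r s, r s}) T := srvAlgCost_serverOfRealloc_le Alg x0 r T
      _ ≤ c * optCost x0 (fun s => {r s, r s}) T + A x0 := hA _ _ _
      _ ≤ c * srvOptCost x0 r T + A x0 := by
        gcongr
        exact optCost_le_srvOptCost x0 r T

section LowerBound

def IsGridPoint (v : ℝ) : Prop := v = 0 ∨ v = 2 ∨ v = 4

lemma IsGridPoint.third {a b : ℝ} (ha : IsGridPoint a) (hb : IsGridPoint b) (hab : a ≠ b) :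
    IsGridPoint (6 - a - b) ∧ 6 - a - b ≠ a ∧ 6 - a - b ≠ b := by
  rcases ha with rfl | rfl | rfl <;> rcases hb with rfl | rfl | rfl <;>
    norm_num [IsGridPoint] at *

lemma IsGridPoint.two_le_abs_sub {v w : ℝ} (hv : IsGridPoint v) (hw : IsGridPoint w)
    (hne : v ≠ w) : 2 ≤ |v - w| := by
  rcases hv with rfl | rfl | rfl <;> rcases hw with rfl | rfl | rfl <;> norm_num at *

lemma IsGridPoint.eq_or_eq {a b c d : ℝ} (ha : IsGridPoint a) (hb : IsGridPoint b)
    (hc : IsGridPoint c) (hd : IsGridPoint d) (hab : a ≠ b) (hac : a ≠ c) (hbc : b ≠ c)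
    (hda : d ≠ a) : d = b ∨ d = c := by
  rcases ha with rfl | rfl | rfl <;> rcases hb with rfl | rfl | rfl <;>
    rcases hc with rfl | rfl | rfl <;> rcases hd with rfl | rfl | rfl <;> norm_num at *

def IsLazyConfig (z : ℝ × ℝ) (r : ℝ) : Prop :=
  IsGridPoint z.1 ∧ IsGridPoint z.2 ∧ z.1 ≠ z.2 ∧ (r = z.1 ∨ r = z.2)

/-- The requests may jump between the ends 0 and 4 while the lazy configuration only moves its
middle server; this potential pays the difference. -/
def lazyPotential (z : ℝ × ℝ) (r : ℝ) : ℝ := if z.1 + z.2 - r = 2 then 2 else 0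

lemma lazyPotential_nonneg (z : ℝ × ℝ) (r : ℝ) : 0 ≤ lazyPotential z r := by
  unfold lazyPotential
  split_ifs <;> norm_num

lemma IsLazyConfig.step {z z' : ℝ × ℝ} {r : ℝ} (hz : IsLazyConfig z r)
    (hz' : z' = (6 - z.1 - z.2, z.2) ∨ z' = (z.1, 6 - z.1 - z.2)) :
    IsLazyConfig z' (6 - z.1 - z.2) ∧
      |6 - z.1 - z.2 - r| + lazyPotential z' (6 - z.1 - z.2) ≤
        moveCost z z' + lazyPotential z r := by
  obtain ⟨a, b⟩ := z
  obtain ⟨ha, hb, hab, hr⟩ := hz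
  obtain ⟨hu, hua, hub⟩ := ha.third hb hab
  dsimp only at *
  refine ⟨?_, ?_⟩
  · rcases hz' with rfl | rfl
    exacts [⟨hu, hb, hub, Or.inl rfl⟩, ⟨ha, hu, hua.symm, Or.inr rfl⟩]
  · rcases ha with rfl | rfl | rfl <;> rcases hb with rfl | rfl | rfl <;>
      rcases hr with rfl | rfl <;> rcases hz' with rfl | rfl <;>
      norm_num [lazyPotential, moveCost] at *

def matchDist (y z : ℝ × ℝ) : ℝ :=
  min (|y.1 - z.1| + |y.2 - z.2|) (|y.1 - z.2| + |y.2 - z.1|)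

lemma matchDist_nonneg (y z : ℝ × ℝ) : 0 ≤ matchDist y z := by
  unfold matchDist; positivity

lemma matchDist_le_moveCost_add (y y' z : ℝ × ℝ) :
    matchDist y' z ≤ moveCost y y' + matchDist y z := by
  have h11 := abs_sub_le y'.1 y.1 z.1
  have h12 := abs_sub_le y'.1 y.1 z.2
  have h21 := abs_sub_le y'.2 y.2 z.1
  have h22 := abs_sub_le y'.2 y.2 z.2
  have e1 := abs_sub_comm y'.1 y.1
  have e2 := abs_sub_comm y'.2 y.2
  unfold matchDist moveCost
  rcases min_choice (|y.1 - z.1| + |y.2 - z.2|) (|y.1 - z.2| + |y.2 - z.1|) with h | h <;>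
    rw [h]
  · exact (min_le_left _ _).trans (by linarith)
  · exact (min_le_right _ _).trans (by linarith)

def respond (z : ℝ × ℝ) (u : ℝ) (y : ℝ × ℝ) : ℝ × ℝ :=
  if |z.1 - u| + matchDist y (u, z.2) ≤ |z.2 - u| + matchDist y (z.1, u) then (u, z.2)
  else (z.1, u)

lemma respond_eq_or (z : ℝ × ℝ) (u : ℝ) (y : ℝ × ℝ) :
    respond z u y = (u, z.2) ∨ respond z u y = (z.1, u) := by
  unfold respond
  split_ifs
  exacts [Or.inl rfl, Or.inr rfl]

lemma moveCost_respond_add_matchDist_le {z y : ℝ × ℝ} {u : ℝ} (hy : y.1 = u ∨ y.2 = u) :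
    moveCost z (respond z u y) + matchDist y (respond z u y) ≤ matchDist y z := by
  have hgreedy : moveCost z (respond z u y) + matchDist y (respond z u y) =
      min (|z.1 - u| + matchDist y (u, z.2)) (|z.2 - u| + matchDist y (z.1, u)) := by
    unfold respond
    split_ifs with h
    · rw [min_eq_left h]
      simp only [moveCost, sub_self, abs_zero, add_zero, abs_sub_comm u z.1]
    · rw [min_eq_right (not_le.mp h).le]
      simp only [moveCost, sub_self, abs_zero, zero_add, abs_sub_comm u z.2]
  rw [hgreedy]
  obtain ⟨y₁, y₂⟩ := y
  rcases hy with rfl | rfl <;> simp only [matchDist, sub_self, abs_zero, add_zero, zero_add]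
  · refine min_le_min ?_ ?_
    · rw [abs_sub_comm z.1]; gcongr; exact min_le_left _ _
    · rw [abs_sub_comm z.2]; gcongr; exact min_le_right _ _
  · rw [min_comm (|y₁ - z.1| + _)]
    refine min_le_min ?_ ?_
    · rw [abs_sub_comm z.1, add_comm]; gcongr; exact min_le_right _ _
    · rw [abs_sub_comm z.2, add_comm]; gcongr; exact min_le_left _ _

variable (B : ℝ × ℝ → ℕ → (ℕ → ℝ) → ℝ × ℝ)

/-- The adversary against `B` started at `(0, 2)`: the state holds the requests issued so far and
a lazy grid configuration, and the next request is the grid point this configuration misses. -/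
def adversary : ℕ → (ℕ → ℝ) × (ℝ × ℝ)
  | 0 => (fun _ => 0, (0, 2))
  | t + 1 =>
    let z := (adversary t).2
    let r := Function.update (adversary t).1 (t + 1) (6 - z.1 - z.2)
    (r, respond z (r (t + 1)) (B (0, 2) (t + 1) r))

def advReq (t : ℕ) : ℝ := (adversary B t).1 t

def advConfig (t : ℕ) : ℝ × ℝ := (adversary B t).2

lemma adversary_fst_of_le {s t : ℕ} (hst : s ≤ t) : (adversary B t).1 s = advReq B s := by
  induction t with
  | zero => obtain rfl := Nat.le_zero.mp hst; rfl
  | succ t ih =>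
    rcases hst.eq_or_lt with rfl | hlt
    · rfl
    · simp only [adversary, Function.update_of_ne hlt.ne, ih (Nat.le_of_lt_succ hlt)]

lemma advReq_succ (t : ℕ) : advReq B (t + 1) = 6 - (advConfig B t).1 - (advConfig B t).2 := by
  simp [advReq, advConfig, adversary]

lemma advConfig_succ_eq_or (t : ℕ) :
    advConfig B (t + 1) = (advReq B (t + 1), (advConfig B t).2) ∨
      advConfig B (t + 1) = ((advConfig B t).1, advReq B (t + 1)) :=
  respond_eq_or _ _ _

lemma advConfig_succ (hOn : ∀ x0 t r r', (∀ s ≤ t, r s = r' s) → B x0 t r = B x0 t r')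
    (t : ℕ) : advConfig B (t + 1) =
      respond (advConfig B t) (advReq B (t + 1)) (B (0, 2) (t + 1) (advReq B)) := by
  change respond _ _ (B (0, 2) (t + 1) (adversary B (t + 1)).1) = _
  rw [hOn _ _ _ (advReq B) fun s hs => adversary_fst_of_le B hs]
  rfl

lemma isLazyConfig_advConfig (t : ℕ) : IsLazyConfig (advConfig B t) (advReq B t) := by
  induction t with
  | zero =>
    exact ⟨Or.inl rfl, Or.inr (Or.inl rfl), by norm_num [advConfig, adversary], Or.inl rfl⟩
  | succ t ih =>
    rw [advReq_succ]
    exact (ih.step (advReq_succ B t ▸ advConfig_succ_eq_or B t)).1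

lemma isGridPoint_advReq (t : ℕ) : IsGridPoint (advReq B t) := by
  obtain ⟨h₁, h₂, -, hr | hr⟩ := isLazyConfig_advConfig B t <;> rw [hr] <;> assumption

lemma advReq_succ_ne (t : ℕ) : advReq B (t + 1) ≠ advReq B t := by
  obtain ⟨h₁, h₂, h₁₂, hr⟩ := isLazyConfig_advConfig B t
  obtain ⟨-, hne₁, hne₂⟩ := h₁.third h₂ h₁₂
  rw [advReq_succ]
  rcases hr with hr | hr <;> rwa [hr]

lemma sum_abs_sub_advReq_le
    (hOn : ∀ x0 t r r', (∀ s ≤ t, r s = r' s) → B x0 t r = B x0 t r')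
    (hServe : ∀ x0 t r, 1 ≤ t → (B x0 t r).1 = r t ∨ (B x0 t r).2 = r t) (T : ℕ) :
    ∑ t ∈ range T, |advReq B (t + 1) - advReq B t| ≤ srvAlgCost B (0, 2) (advReq B) T + 2 := by
  set y := srvPos B (0, 2) (advReq B)
  set Φ := fun t => lazyPotential (advConfig B t) (advReq B t)
  set Ψ := fun t => matchDist (y t) (advConfig B t)
  have hstep : ∀ t,
      |advReq B (t + 1) - advReq B t| + (Φ (t + 1) - Φ t) + (Ψ (t + 1) - Ψ t) ≤
        moveCost (y t) (y (t + 1)) := by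
    intro t
    have hlazy := ((isLazyConfig_advConfig B t).step
      (advReq_succ B t ▸ advConfig_succ_eq_or B t)).2
    rw [← advReq_succ] at hlazy
    have hsim := moveCost_respond_add_matchDist_le (z := advConfig B t)
      (hServe (0, 2) (t + 1) (advReq B) (Nat.le_add_left 1 t))
    rw [← advConfig_succ B hOn] at hsim
    have hlip := matchDist_le_moveCost_add (y t) (y (t + 1)) (advConfig B t)
    have hy : y (t + 1) = B (0, 2) (t + 1) (advReq B) := rfl
    simp only [Φ, Ψ]
    rw [hy] at hlip ⊢
    linarith
  have hsum := sum_le_sum fun t (_ : t ∈ range T) => hstep t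
  rw [sum_add_distrib, sum_add_distrib, sum_range_sub Φ, sum_range_sub Ψ] at hsum
  have hΦ0 : Φ 0 = 2 := by norm_num [Φ, lazyPotential, advConfig, adversary, advReq]
  have hΨ0 : Ψ 0 = 0 := by norm_num [Ψ, y, matchDist, advConfig, adversary, srvPos]
  have := lazyPotential_nonneg (advConfig B T) (advReq B T)
  have := matchDist_nonneg (y T) (advConfig B T)
  simp only [srvAlgCost, sum_Icc_one_eq_sum_range (fun t => moveCost _ _), Nat.add_sub_cancel]
  linarith

end LowerBound

def IsPairOf (p : ℝ × ℝ) (a b : ℝ) : Prop := p = (a, b) ∨ p = (b, a)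

def lazyStep (a a' : ℝ) (p : ℝ × ℝ) : ℝ × ℝ :=
  if p.1 = a' ∨ p.2 = a' then p else if p.1 = a then (a', p.2) else (p.1, a')

lemma IsPairOf.serves {p : ℝ × ℝ} {a b : ℝ} (h : IsPairOf p a b) : p.1 = a ∨ p.2 = a := by
  rcases h with rfl | rfl
  exacts [Or.inl rfl, Or.inr rfl]

lemma lazyStep_of_isPairOf {p : ℝ × ℝ} {a a' : ℝ} (h : IsPairOf p a a') : lazyStep a a' p = p :=
  if_pos (by rcases h with rfl | rfl <;> simp)

lemma isPairOf_lazyStep {p : ℝ × ℝ} {a a' w : ℝ} (h : IsPairOf p a w) (hwa' : w ≠ a')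
    (haa' : a ≠ a') (hwa : w ≠ a) :
    IsPairOf (lazyStep a a' p) a' w ∧ moveCost p (lazyStep a a' p) = |a' - a| := by
  rcases h with rfl | rfl
  · rw [lazyStep, if_neg (by simp [haa', hwa']), if_pos rfl]
    exact ⟨Or.inl rfl, by simp [moveCost]⟩
  · rw [lazyStep, if_neg (by simp [haa', hwa']), if_neg hwa]
    exact ⟨Or.inr rfl, by simp [moveCost]⟩

def AreLazyPairs (p q : ℝ × ℝ) (a : ℝ) : Prop :=
  ∃ w₁ w₂, IsGridPoint a ∧ IsGridPoint w₁ ∧ IsGridPoint w₂ ∧ w₁ ≠ w₂ ∧ w₁ ≠ a ∧ w₂ ≠ a ∧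
    IsPairOf p a w₁ ∧ IsPairOf q a w₂

/-- Whatever the next grid request `a'`, one of the two configurations already covers it and the
other pays `|a' - a|`. -/
lemma AreLazyPairs.step {p q : ℝ × ℝ} {a a' : ℝ} (h : AreLazyPairs p q a)
    (ha' : IsGridPoint a') (hne : a' ≠ a) :
    AreLazyPairs (lazyStep a a' p) (lazyStep a a' q) a' ∧
      moveCost p (lazyStep a a' p) + moveCost q (lazyStep a a' q) = |a' - a| := by
  obtain ⟨w₁, w₂, ha, hw₁, hw₂, h₁₂, h₁, h₂, hp, hq⟩ := h
  rcases ha.eq_or_eq hw₁ hw₂ ha' h₁.symm h₂.symm h₁₂ hne with rfl | rfl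
  · obtain ⟨hq', hcost⟩ := isPairOf_lazyStep hq h₁₂.symm hne.symm h₂
    rw [lazyStep_of_isPairOf hp, hcost]
    exact ⟨⟨a, w₂, ha', ha, hw₂, h₂.symm, hne.symm, h₁₂.symm, hp.symm, hq'⟩,
      by simp [moveCost]⟩
  · obtain ⟨hp', hcost⟩ := isPairOf_lazyStep hp h₁₂ hne.symm h₁
    rw [lazyStep_of_isPairOf hq, hcost]
    exact ⟨⟨w₁, a, ha', hw₁, ha, h₁, h₁₂, hne.symm, hp', hq.symm⟩, by simp [moveCost]⟩

def lazySchedule (r : ℕ → ℝ) (p₁ : ℝ × ℝ) : ℕ → ℝ × ℝ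
  | 0 => (0, 2)
  | 1 => p₁
  | t + 2 => lazyStep (r (t + 1)) (r (t + 2)) (lazySchedule r p₁ (t + 1))

lemma areLazyPairs_lazySchedule {r : ℕ → ℝ} (h1 : r 1 = 4) (hgrid : ∀ t, IsGridPoint (r t))
    (hne : ∀ t, r (t + 1) ≠ r t) (t : ℕ) :
    AreLazyPairs (lazySchedule r (0, 4) (t + 1)) (lazySchedule r (4, 2) (t + 1))
      (r (t + 1)) := by
  induction t with
  | zero =>
    rw [zero_add, h1]
    exact ⟨0, 2, by norm_num [IsGridPoint], by norm_num [IsGridPoint], by norm_num [IsGridPoint],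
      by norm_num, by norm_num, by norm_num, Or.inr rfl, Or.inl rfl⟩
  | succ t ih => exact (ih.step (hgrid _) (hne _)).1

lemma two_mul_srvOptCost_le {r : ℕ → ℝ} (h0 : r 0 = 0) (h1 : r 1 = 4)
    (hgrid : ∀ t, IsGridPoint (r t)) (hne : ∀ t, r (t + 1) ≠ r t) (T : ℕ) :
    2 * srvOptCost (0, 2) r T ≤ ∑ t ∈ range T, |r (t + 1) - r t| + 2 := by
  have hopt : ∀ p₁, (p₁ = (0, 4) ∨ p₁ = (4, 2)) → srvOptCost (0, 2) r T ≤
      ∑ t ∈ range T, moveCost (lazySchedule r p₁ t) (lazySchedule r p₁ (t + 1)) := by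
    rintro p₁ hp₁
    refine srvOptCost_le rfl fun t ht => ?_
    obtain ⟨s, rfl⟩ := Nat.exists_eq_add_of_le' (mem_Icc.mp ht).1
    obtain ⟨w₁, w₂, -, -, -, -, -, -, hp, hq⟩ := areLazyPairs_lazySchedule h1 hgrid hne s
    rcases hp₁ with rfl | rfl
    exacts [hp.serves, hq.serves]
  have hcost : ∑ t ∈ range T,
      (moveCost (lazySchedule r (0, 4) t) (lazySchedule r (0, 4) (t + 1)) +
        moveCost (lazySchedule r (4, 2) t) (lazySchedule r (4, 2) (t + 1))) ≤
      ∑ t ∈ range T, |r (t + 1) - r t| + 2 := by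
    rcases T with _ | T
    · simp
    rw [sum_range_succ', sum_range_succ']
    have hfirst : moveCost (0, 2) (0, 4) + moveCost (0, 2) (4, 2) = |r 1 - r 0| + 2 := by
      norm_num [moveCost, h0, h1]
    have hrest := fun t =>
      ((areLazyPairs_lazySchedule h1 hgrid hne t).step (hgrid _) (hne _)).2
    simp only [lazySchedule, hrest] at hfirst ⊢
    linarith
  rw [sum_add_distrib] at hcost
  linarith [hopt _ (Or.inl rfl), hopt _ (Or.inr rfl)]

lemma two_mul_le_sum_abs_sub {r : ℕ → ℝ} (hgrid : ∀ t, IsGridPoint (r t))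
    (hne : ∀ t, r (t + 1) ≠ r t) (T : ℕ) : 2 * (T : ℝ) ≤ ∑ t ∈ range T, |r (t + 1) - r t| :=
  calc 2 * (T : ℝ) = ∑ t ∈ range T, 2 := by simp [mul_comm]
    _ ≤ _ := sum_le_sum fun t _ => (hgrid _).two_le_abs_sub (hgrid t) (hne t)

theorem ServerCompetitive.two_le {c : ℝ} {B : ℝ × ℝ → ℕ → (ℕ → ℝ) → ℝ × ℝ}
    (h : ServerCompetitive c B) : 2 ≤ c := by
  obtain ⟨hOn, hServe, A, hA⟩ := h
  by_contra! hc
  set c' := max c 0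
  have hc' : c' < 2 := max_lt hc two_pos
  have hbound : ∀ T : ℕ, (2 - c') * (2 * T) ≤ 4 + 2 * c' + 2 * A (0, 2) := by
    intro T
    set S := ∑ t ∈ range T, |advReq B (t + 1) - advReq B t|
    have hS : 2 * (T : ℝ) ≤ S :=
      two_mul_le_sum_abs_sub (isGridPoint_advReq B) (advReq_succ_ne B) T
    have honline := sum_abs_sub_advReq_le B hOn hServe T
    have hoffline := two_mul_srvOptCost_le rfl (by norm_num [advReq_succ, advConfig, adversary])
      (isGridPoint_advReq B) (advReq_succ_ne B) T
    set opt := srvOptCost (0, 2) (advReq B) T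
    have hcc' : c * opt ≤ c' * opt :=
      mul_le_mul_of_nonneg_right (le_max_left c 0) (srvOptCost_nonneg _ _ _)
    have hc'opt : c' * (2 * opt) ≤ c' * (S + 2) :=
      mul_le_mul_of_nonneg_left hoffline (le_max_right c 0)
    have hST : (2 - c') * (2 * T) ≤ (2 - c') * S := mul_le_mul_of_nonneg_left hS (by linarith)
    linarith [hA (0, 2) (advReq B) T]
  obtain ⟨T, hT⟩ := exists_nat_gt ((4 + 2 * c' + 2 * A (0, 2)) / (2 * (2 - c')))
  rw [div_lt_iff₀ (by linarith)] at hT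
  linarith [hbound T]

theorem ReallocCompetitive.two_le {c : ℝ} {Alg : ℝ × ℝ → ℕ → (ℕ → Multiset ℝ) → ℝ × ℝ}
    (h : ReallocCompetitive c Alg) : 2 ≤ c := by
  have := ((h.mono (le_max_left c 0)).serverCompetitive (le_max_right c 0)).two_le
  exact (le_max_iff.mp this).resolve_right (by norm_num)

/-- Lower bound transfer: any c-competitive online algorithm for 2-facility reallocation
on the line yields a c-competitive online algorithm for the 2-server problem on the
line; in particular, since the 2-server problem on the line has competitive ratio at
least 2, no online 2-facility reallocation algorithm is c-competitive for c < 2. -/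
theorem stmt19 :
    (∀ c : ℝ, (∃ Alg, ReallocCompetitive c Alg) → ∃ B, ServerCompetitive c B) ∧
    (∀ c : ℝ, c < 2 → ¬ ∃ Alg, ReallocCompetitive c Alg) :=
  ⟨fun _ ⟨Alg, h⟩ => ⟨_, h.serverCompetitive (by linarith [h.two_le])⟩,
    fun _ hc ⟨_, h⟩ => hc.not_ge h.two_le⟩

end
end
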